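/- Let Z ⊆ ℝⁿ be closed and convex, let f : Z → ℝⁿ be globally L-Lipschitz with −f β-strongly monotone, and consider the anti-windup approximation ż = F_K(z) := f(P_Z(z)) − (1/K)(z − P_Z(z)) with identity metric G ≡ I. Then for all K with 0 < K < 4β/L², the system has a unique equilibrium point z* ∈ ℝⁿ, every (complete) solution of ż = F_K(z) converges to z* as t → ∞, and P_Z(z*) is the unique equilibrium of the projected dynamical system ż = Π_Z[f](z), z ∈ Z (i.e., the unique point z̄ ∈ Z with Π_Z[f(z̄)](z̄) = 0). -/

import Mathlib

open Metric Set Filter Topology MeasureTheory Pointwise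
open scoped RealInnerProductSpace

noncomputable section

/-- Euclidean space `ℝⁿ`. -/
abbrev Euc (n : ℕ) := EuclideanSpace ℝ (Fin n)

/-- Continuous linear operators on `ℝⁿ` (playing the role of `n × n` matrices). -/
abbrev EucOp (n : ℕ) := Euc n →L[ℝ] Euc n

variable {n : ℕ}

/-- The set of nearest points of `C` to `x` (the Euclidean projection `P_C(x)`). -/
def projSet (C : Set (Euc n)) (x : Euc n) : Set (Euc n) :=
  {c | c ∈ C ∧ dist x c = Metric.infDist x C}

/-- The (Bouligand) tangent cone to `C` at `x`, via sequences:
`v = lim (xk - x)/δk` with `xk ∈ C`, `xk → x`, `δk → 0⁺`. -/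
def tanCone (C : Set (Euc n)) (x : Euc n) : Set (Euc n) :=
  {v | ∃ (xk : ℕ → Euc n) (δk : ℕ → ℝ),
    (∀ k, xk k ∈ C) ∧ Filter.Tendsto xk Filter.atTop (nhds x) ∧
    (∀ k, 0 < δk k) ∧ Filter.Tendsto δk Filter.atTop (nhds 0) ∧
    Filter.Tendsto (fun k => (δk k)⁻¹ • (xk k - x)) Filter.atTop (nhds v)}

/-- Clarke regularity: sequential inner semicontinuity of the tangent-cone map on `C`. -/
def ClarkeRegular (C : Set (Euc n)) : Prop :=
  ∀ x ∈ C, ∀ v ∈ tanCone C x, ∀ xk : ℕ → Euc n,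
    (∀ k, xk k ∈ C) → Filter.Tendsto xk Filter.atTop (nhds x) →
    ∃ vk : ℕ → Euc n, (∀ k, vk k ∈ tanCone C (xk k)) ∧
      Filter.Tendsto vk Filter.atTop (nhds v)

/-- The Euclidean normal cone `N_xC`, the polar of the tangent cone. -/
def normalCone (C : Set (Euc n)) (x : Euc n) : Set (Euc n) :=
  {η | ∀ v ∈ tanCone C x, ⟪η, v⟫ ≤ 0}

/-- `C` is `α`-prox-regular at `x`: every normal vector at `x` is `α`-proximal. -/
def ProxRegularAt (C : Set (Euc n)) (α : ℝ) (x : Euc n) : Prop :=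
  ∀ η ∈ normalCone C x, ∀ y ∈ C, ⟪η, y - x⟫ ≤ α * ‖η‖ * ‖y - x‖ ^ 2

/-- `C` is `α`-prox-regular: Clarke regular and `α`-prox-regular at every point. -/
def ProxRegular (C : Set (Euc n)) (α : ℝ) : Prop :=
  ClarkeRegular C ∧ ∀ x ∈ C, ProxRegularAt C α x

/-- `G` is a (continuous) metric on `C`: continuous, symmetric, positive definite. -/
def IsMetricOn (C : Set (Euc n)) (G : Euc n → EucOp n) : Prop :=
  ContinuousOn G C ∧
    ∀ x ∈ C, (∀ u v : Euc n, ⟪G x u, v⟫ = ⟪u, G x v⟫) ∧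
      ∀ u : Euc n, u ≠ 0 → 0 < ⟪u, G x u⟫

/-- The inner product `⟨u, v⟩_{G(x)} := uᵀ G(x) v` induced by an operator `Gx`. -/
def innerG (Gx : EucOp n) (u v : Euc n) : ℝ := ⟪u, Gx v⟫

/-- The norm `‖u‖_{G(x)}` induced by an operator `Gx`. -/
def normG (Gx : EucOp n) (u : Euc n) : ℝ := Real.sqrt (innerG Gx u u)

/-- The `G`-normal cone `N^G_xC`. -/
def normalConeG (C : Set (Euc n)) (G : Euc n → EucOp n) (x : Euc n) : Set (Euc n) :=
  {η | ∀ v ∈ tanCone C x, innerG (G x) η v ≤ 0}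

/-- The projection `Π^G_C[w](x)`: minimizers of `‖v - w‖_{G(x)}` over the tangent cone. -/
def projTanG (C : Set (Euc n)) (G : Euc n → EucOp n) (w x : Euc n) : Set (Euc n) :=
  {v | v ∈ tanCone C x ∧ ∀ u ∈ tanCone C x, normG (G x) (v - w) ≤ normG (G x) (u - w)}

/-- The Euclidean projection onto the tangent cone, `Π_C[w](x)` (identity metric). -/
def projTanI (C : Set (Euc n)) (w x : Euc n) : Set (Euc n) :=
  {v | v ∈ tanCone C x ∧ ∀ u ∈ tanCone C x, ‖v - w‖ ≤ ‖u - w‖}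

/-- `z` is a Carathéodory solution of `ż ∈ H(z)`, `z ∈ C`, on `[0,T]`, with (a.e.)
derivative `v`: absolute continuity is encoded by the integral representation. -/
def SolutionVia (H : Euc n → Set (Euc n)) (C : Set (Euc n)) (T : ℝ)
    (z v : ℝ → Euc n) : Prop :=
  (∀ t ∈ Set.Icc (0:ℝ) T, z t ∈ C) ∧
  MeasureTheory.IntegrableOn v (Set.Icc (0:ℝ) T) ∧
  (∀ᵐ t ∂(MeasureTheory.volume.restrict (Set.Icc (0:ℝ) T)), v t ∈ H (z t)) ∧
  (∀ t ∈ Set.Icc (0:ℝ) T, z t = z 0 + ∫ s in (0:ℝ)..t, v s)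

/-- `z` is a Carathéodory solution of `ż ∈ H(z)`, `z ∈ C`, on `[0,T]`. -/
def IsSolutionOn (H : Euc n → Set (Euc n)) (C : Set (Euc n)) (T : ℝ)
    (z : ℝ → Euc n) : Prop :=
  ∃ v : ℝ → Euc n, SolutionVia H C T z v

/-- `z : [0,T'] → ℝⁿ` is a `(T, ε)`-truncated solution of `ż ∈ H(z)`, `z ∈ C`,
with initial condition `z₀`. -/
def IsTruncSol (H : Euc n → Set (Euc n)) (C : Set (Euc n)) (T ε : ℝ) (z₀ : Euc n)
    (T' : ℝ) (z : ℝ → Euc n) : Prop :=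
  0 ≤ T' ∧ T' ≤ T ∧ IsSolutionOn H C T' z ∧ z 0 = z₀ ∧
  (∀ t ∈ Set.Icc (0:ℝ) T', ‖z t - z₀‖ ≤ ε) ∧ (T' = T ∨ ‖z T' - z₀‖ = ε)

/-- A complete solution: a solution on every compact interval `[0,T]`. -/
def IsCompleteSol (H : Euc n → Set (Euc n)) (C : Set (Euc n)) (z : ℝ → Euc n) : Prop :=
  ∀ T : ℝ, 0 ≤ T → IsSolutionOn H C T z

/-- The graph of a map defined on `[0,T']`, as a subset of `ℝ × ℝⁿ`. -/
def graphOn (T' : ℝ) (z : ℝ → Euc n) : Set (ℝ × Euc n) :=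
  {p | p.1 ∈ Set.Icc (0:ℝ) T' ∧ p.2 = z p.1}

/-- Painlevé–Kuratowski convergence of a sequence of sets to `L`:
`L` is contained in the inner limit and contains the outer limit. -/
def KuratowskiTendsto {X : Type*} [TopologicalSpace X] (A : ℕ → Set X) (L : Set X) : Prop :=
  (∀ x ∈ L, ∀ U ∈ nhds x, ∀ᶠ i in Filter.atTop, (A i ∩ U).Nonempty) ∧
  (∀ x : X, (∀ U ∈ nhds x, ∃ᶠ i in Filter.atTop, (A i ∩ U).Nonempty) → x ∈ L)

/-- The enlarged set `Z°_α := Z + (1/(2α))·int 𝔹` on which the projection is single-valued. -/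
def ZballSet (Z : Set (Euc n)) (α : ℝ) : Set (Euc n) :=
  Z + Metric.ball (0 : Euc n) (1 / (2 * α))

/-- The anti-windup approximation vector field
`F_K(z) = f(z, P_Z(z)) − (1/K)·G⁻¹(P_Z(z))(z − P_Z(z))`, as a set-valued map. -/
def AWA (f : Euc n → Euc n → Euc n) (Ginv : Euc n → EucOp n) (Z : Set (Euc n)) (K : ℝ)
    (z : Euc n) : Set (Euc n) :=
  (fun zb => f z zb - K⁻¹ • Ginv zb (z - zb)) '' projSet Z z

/-- The special anti-windup vector field `F_K(z) = f(P_Z(z)) − (1/K)·G⁻¹(P_Z(z))(z − P_Z(z))`. -/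
def AWAspec (f : Euc n → Euc n) (Ginv : Euc n → EucOp n) (Z : Set (Euc n)) (K : ℝ)
    (z : Euc n) : Set (Euc n) :=
  (fun zb => f zb - K⁻¹ • Ginv zb (z - zb)) '' projSet Z z

/-- `Ginv` is a pointwise (two-sided) inverse of `G` on `Z`. -/
def InverseOn (G Ginv : Euc n → EucOp n) (Z : Set (Euc n)) : Prop :=
  ∀ x ∈ Z, (∀ u : Euc n, G x (Ginv x u) = u) ∧ (∀ u : Euc n, Ginv x (G x u) = u)

/-- A function of class `K∞` on `[0,∞)`. -/
def ClassKInf (ω : ℝ → ℝ) : Prop :=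
  ContinuousOn ω (Set.Ici (0:ℝ)) ∧ StrictMonoOn ω (Set.Ici (0:ℝ)) ∧
  (∀ M : ℝ, ∃ r : ℝ, 0 ≤ r ∧ M ≤ ω r) ∧ ω 0 = 0 ∧ ∀ r : ℝ, 0 ≤ r → 0 ≤ ω r

/-- A function of class `KL` on `[0,∞)²`. -/
def ClassKL (β : ℝ → ℝ → ℝ) : Prop :=
  (∀ r s : ℝ, 0 ≤ r → 0 ≤ s → 0 ≤ β r s) ∧
  (∀ s : ℝ, 0 ≤ s → MonotoneOn (fun r => β r s) (Set.Ici (0:ℝ))) ∧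
  (∀ r : ℝ, 0 ≤ r → AntitoneOn (β r) (Set.Ici (0:ℝ))) ∧
  (∀ s : ℝ, 0 ≤ s → Filter.Tendsto (fun r => β r s) (nhdsWithin 0 (Set.Ioi 0)) (nhds 0)) ∧
  (∀ r : ℝ, 0 ≤ r → Filter.Tendsto (β r) Filter.atTop (nhds 0))

/-- The local assumption (Assumption 3.3) at `z₀ ∈ Z` with constants `M, ν, μ, α, ε`. -/
def LocalAssumption (Z : Set (Euc n)) (f : Euc n → Euc n → Euc n) (Ginv : Euc n → EucOp n)
    (z₀ : Euc n) (M ν μ α ε : ℝ) : Prop :=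
  (0 < M ∧ 0 < ν ∧ 0 < μ ∧ 0 < α ∧ 0 < ε) ∧
  (∀ z ∈ Metric.closedBall z₀ ε ∩ ZballSet Z α, ∀ zb ∈ projSet Z z, ‖f z zb‖ ≤ M) ∧
  (∀ z ∈ Metric.closedBall z₀ ε ∩ ZballSet Z α, ∀ zb ∈ projSet Z z, ∀ u : Euc n,
    μ * ‖u‖ ^ 2 ≤ ⟪u, Ginv zb u⟫ ∧ ⟪u, Ginv zb u⟫ ≤ ν * ‖u‖ ^ 2) ∧
  (∀ x ∈ Metric.closedBall z₀ ε ∩ Z, ProxRegularAt Z α x)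

/-- The alternate-form vector field `F̂(z) = f(z, P_Z(z)) − N^G_zZ ∩ γ𝔹` (for `z ∈ Z`). -/
def FhatMap (f : Euc n → Euc n → Euc n) (G : Euc n → EucOp n) (Z : Set (Euc n)) (γ : ℝ)
    (z : Euc n) : Set (Euc n) :=
  (fun η => f z z - η) '' {η | η ∈ normalConeG Z G z ∧ ‖η‖ ≤ γ}

/-- The `σ`-perturbation `H_σ(x) := cl co H((x + σ𝔹) ∩ C) + σ𝔹` of a set-valued map. -/
def perturbMap (H : Euc n → Set (Euc n)) (C : Set (Euc n)) (σ : ℝ) (x : Euc n) :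
    Set (Euc n) :=
  closure (convexHull ℝ (⋃ y ∈ Metric.closedBall x σ ∩ C, H y)) +
    Metric.closedBall (0 : Euc n) σ

end

/-!
The projection `P = P_Z` is firmly nonexpansive: `(w - P w) - (w' - P w')` has nonnegative inner
product with `P w - P w'`. Splitting `w - w'` into these two components, the strong monotonicity of
`-f` on `Z` and the damping `K⁻¹` on the second component make `-F_K` strongly monotone on all of
`ℝⁿ`, as soon as the Lipschitz cross term `L ‖P w - P w'‖ ‖(w - P w) - (w' - P w')‖` is absorbed,
i.e. `K L² < 4β`. A Lipschitz field with strongly monotone negative has exactly one zero `z*`, and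
`‖z - z*‖²` decays like `e^{-2ct}` along solutions. At a zero, `z* - P z* = K f(P z*)`, which says
that `P z*` solves the variational inequality `⟪f z̄, y - z̄⟫ ≤ 0` on `Z`; on a convex set this is
`Π_Z[f(z̄)](z̄) = 0`, and strong monotonicity of `-f` makes its solution unique.
-/

section MetricProjection

variable {E : Type*} [NormedAddCommGroup E] [InnerProductSpace ℝ E] {Z : Set E} {P : E → E}

/-- The nearest-point map onto a convex set, through its variational characterization
(`norm_eq_iInf_iff_real_inner_le_zero`). -/
def IsMetricProj (Z : Set E) (P : E → E) : Prop :=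
  ∀ x, P x ∈ Z ∧ ∀ y ∈ Z, ⟪x - P x, y - P x⟫ ≤ 0

theorem exists_isMetricProj (hZ : IsComplete Z) (hconv : Convex ℝ Z) (hne : Z.Nonempty) :
    ∃ P, IsMetricProj Z P := by
  choose P hPZ hPmin using fun x => exists_norm_eq_iInf_of_complete_convex hne hZ hconv x
  exact ⟨P, fun x => ⟨hPZ x, (norm_eq_iInf_iff_real_inner_le_zero hconv (hPZ x)).1 (hPmin x)⟩⟩

theorem IsMetricProj.eq_of_inner_le (hP : IsMetricProj Z P) {x c : E} (hc : c ∈ Z)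
    (h : ∀ y ∈ Z, ⟪x - c, y - c⟫ ≤ 0) : c = P x := by
  have hsum : ‖P x - c‖ ^ 2 = ⟪x - c, P x - c⟫ + ⟪x - P x, c - P x⟫ := by
    rw [← real_inner_self_eq_norm_sq]
    simp only [inner_sub_left, inner_sub_right, real_inner_comm]
    ring
  have hzero : ‖P x - c‖ ^ 2 ≤ 0 := hsum ▸ add_nonpos (h _ (hP x).1) ((hP x).2 c hc)
  have hnorm : ‖P x - c‖ = 0 := pow_eq_zero_iff two_ne_zero |>.1 (le_antisymm hzero (sq_nonneg _))
  exact (sub_eq_zero.1 (norm_eq_zero.1 hnorm)).symm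

theorem IsMetricProj.norm_sq_le_inner (hP : IsMetricProj Z P) (x y : E) :
    ‖P x - P y‖ ^ 2 ≤ ⟪x - y, P x - P y⟫ := by
  have hsum : ⟪x - y, P x - P y⟫ - ‖P x - P y‖ ^ 2
      = -⟪x - P x, P y - P x⟫ - ⟪y - P y, P x - P y⟫ := by
    rw [← real_inner_self_eq_norm_sq]
    simp only [inner_sub_left, inner_sub_right, real_inner_comm]
    ring
  linarith [(hP x).2 _ (hP y).1, (hP y).2 _ (hP x).1]

theorem IsMetricProj.norm_sub_le (hP : IsMetricProj Z P) (x y : E) :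
    ‖P x - P y‖ ≤ ‖x - y‖ := by
  have h := (hP.norm_sq_le_inner x y).trans (real_inner_le_norm _ _)
  nlinarith [norm_nonneg (P x - P y), norm_nonneg (x - y)]

theorem IsMetricProj.inner_sub_nonneg (hP : IsMetricProj Z P) (x y : E) :
    0 ≤ ⟪(x - P x) - (y - P y), P x - P y⟫ := by
  have h := hP.norm_sq_le_inner x y
  rw [← real_inner_self_eq_norm_sq] at h
  have : (x - P x) - (y - P y) = (x - y) - (P x - P y) := by abel
  rw [this, inner_sub_left]
  linarith

theorem IsMetricProj.apply_add_smul_eq_iff (hP : IsMetricProj Z P) {z v : E} (hz : z ∈ Z)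
    {t : ℝ} (ht : 0 < t) : P (z + t • v) = z ↔ ∀ y ∈ Z, ⟪v, y - z⟫ ≤ 0 := by
  have hinner : ∀ y, ⟪z + t • v - z, y - z⟫ = t * ⟪v, y - z⟫ := fun y => by
    rw [add_sub_cancel_left, real_inner_smul_left]
  constructor
  · intro h y hy
    have := (hP (z + t • v)).2 y hy
    rw [h, hinner] at this
    exact nonpos_of_mul_nonpos_right this ht
  · intro h
    refine (hP.eq_of_inner_le hz fun y hy => ?_).symm
    rw [hinner]
    exact mul_nonpos_of_nonneg_of_nonpos ht.le (h y hy)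

end MetricProjection

section StronglyMonotone

variable {E : Type*} [NormedAddCommGroup E] [InnerProductSpace ℝ E]

theorem norm_add_smul_sub_sq_le {F : E → E} {M c t : ℝ} {x y : E}
    (hlip : ‖F x - F y‖ ≤ M * ‖x - y‖) (hmono : c * ‖x - y‖ ^ 2 ≤ ⟪F y - F x, x - y⟫)
    (ht : 0 ≤ t) (htM : t * M ^ 2 ≤ c) :
    ‖(x + t • F x) - (y + t • F y)‖ ^ 2 ≤ (1 - t * c) * ‖x - y‖ ^ 2 := by
  have hsplit : (x + t • F x) - (y + t • F y) = (x - y) + t • (F x - F y) := by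
    rw [smul_sub]; abel
  have hcross : ⟪x - y, t • (F x - F y)⟫ = -(t * ⟪F y - F x, x - y⟫) := by
    rw [real_inner_smul_right, real_inner_comm, ← neg_sub, inner_neg_left, mul_neg]
  have hsq : ‖F x - F y‖ ^ 2 ≤ M ^ 2 * ‖x - y‖ ^ 2 := by
    rw [← mul_pow]; exact pow_le_pow_left₀ (norm_nonneg _) hlip 2
  rw [hsplit, norm_add_sq_real, hcross, norm_smul, mul_pow, Real.norm_eq_abs, sq_abs]
  nlinarith [mul_le_mul_of_nonneg_left hsq (sq_nonneg t), mul_le_mul_of_nonneg_left hmono ht,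
    mul_le_mul_of_nonneg_right (mul_le_mul_of_nonneg_left htM ht) (sq_nonneg ‖x - y‖)]

/-- For a small step `t`, the explicit Euler map `x ↦ x + t • F x` is a contraction. -/
theorem exists_eq_zero_of_stronglyMonotone [CompleteSpace E] {F : E → E} {M c : ℝ}
    (hc : 0 < c) (hlip : ∀ x y, ‖F x - F y‖ ≤ M * ‖x - y‖)
    (hmono : ∀ x y, c * ‖x - y‖ ^ 2 ≤ ⟪F y - F x, x - y⟫) : ∃ x, F x = 0 := by
  set t := c / (M ^ 2 + c ^ 2)
  have hden : 0 < M ^ 2 + c ^ 2 := by positivity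
  have ht : 0 < t := div_pos hc hden
  have htM : t * M ^ 2 ≤ c := by
    rw [div_mul_eq_mul_div, div_le_iff₀ hden]; nlinarith [sq_nonneg c]
  have htc : t * c ≤ 1 := by
    rw [div_mul_eq_mul_div, div_le_one hden, ← sq]; nlinarith [sq_nonneg M]
  set θ := Real.sqrt (1 - t * c)
  have hθ : θ ^ 2 = 1 - t * c := Real.sq_sqrt (by linarith)
  have hcontr : ContractingWith θ.toNNReal (fun x => x + t • F x) := by
    refine ⟨Real.toNNReal_lt_one.2 ((sq_lt_one_iff₀ (Real.sqrt_nonneg _)).1 ?_),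
      LipschitzWith.of_dist_le_mul fun x y => ?_⟩
    · rw [hθ]; linarith [mul_pos ht hc]
    · rw [Real.coe_toNNReal _ (Real.sqrt_nonneg _), dist_eq_norm, dist_eq_norm]
      refine (sq_le_sq₀ (norm_nonneg _) (by positivity)).1 ?_
      rw [mul_pow, hθ]
      exact norm_add_smul_sub_sq_le (hlip x y) (hmono x y) ht.le htM
  obtain ⟨x, hx⟩ : ∃ x, x + t • F x = x :=
    ⟨_, ContractingWith.fixedPoint_isFixedPt (f := fun x => x + t • F x) hcontr⟩
  exact ⟨x, (smul_eq_zero.1 (add_eq_left.1 hx)).resolve_left ht.ne'⟩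

theorem eq_of_stronglyMonotone {F : E → E} {c : ℝ} (hc : 0 < c)
    (hmono : ∀ x y, c * ‖x - y‖ ^ 2 ≤ ⟪F y - F x, x - y⟫) {x y : E} (hx : F x = 0)
    (hy : F y = 0) : x = y := by
  have h := hmono x y
  rw [hx, hy, sub_zero, inner_zero_left] at h
  have hsq : ‖x - y‖ ^ 2 = 0 := le_antisymm (nonpos_of_mul_nonpos_right h hc) (sq_nonneg _)
  exact sub_eq_zero.1 (norm_eq_zero.1 (pow_eq_zero_iff two_ne_zero |>.1 hsq))

theorem eq_of_forall_inner_le_zero_of_stronglyMonotoneOn {Z : Set E} {f : E → E} {β : ℝ}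
    (hβ : 0 < β) (hmono : ∀ x ∈ Z, ∀ x' ∈ Z, β * ‖x - x'‖ ^ 2 ≤ ⟪f x' - f x, x - x'⟫)
    {x y : E} (hx : x ∈ Z) (hy : y ∈ Z) (hvx : ∀ z ∈ Z, ⟪f x, z - x⟫ ≤ 0)
    (hvy : ∀ z ∈ Z, ⟪f y, z - y⟫ ≤ 0) : x = y := by
  have h := hmono x hx y hy
  have hsplit : ⟪f y - f x, x - y⟫ = ⟪f y, x - y⟫ + ⟪f x, y - x⟫ := by
    simp only [inner_sub_left, inner_sub_right]; ring
  have hsq : ‖x - y‖ ^ 2 = 0 := le_antisymm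
    (nonpos_of_mul_nonpos_right (by linarith [hvx y hy, hvy x hx]) hβ) (sq_nonneg _)
  exact sub_eq_zero.1 (norm_eq_zero.1 (pow_eq_zero_iff two_ne_zero |>.1 hsq))

/-- The witness `c = (4βk - L²) / (4(β + k))` keeps `c < β` and `L² ≤ 4(β - c)(k - c)`, so the
form shifted by `c` is still positive semidefinite. -/
theorem exists_pos_mul_sq_add_sq_le {β k L : ℝ} (hβ : 0 < β) (hk : 0 < k) (hL : L ^ 2 < 4 * β * k) :
    ∃ c > 0, ∀ a b : ℝ, c * (a ^ 2 + b ^ 2) ≤ β * a ^ 2 - L * a * b + k * b ^ 2 := by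
  set c := (4 * β * k - L ^ 2) / (4 * (β + k))
  have hden : 0 < 4 * (β + k) := by positivity
  have hc : 0 < c := div_pos (by linarith) hden
  have hcβ : c < β := by
    rw [div_lt_iff₀ hden]; nlinarith [sq_nonneg L]
  have hdisc : L ^ 2 ≤ 4 * (β - c) * (k - c) := by
    have : c * (4 * (β + k)) = 4 * β * k - L ^ 2 := div_mul_cancel₀ _ hden.ne'
    nlinarith [sq_nonneg c]
  refine ⟨c, hc, fun a b => ?_⟩
  nlinarith [sq_nonneg (2 * (β - c) * a - L * b), mul_nonneg (sub_nonneg.2 hdisc) (sq_nonneg b),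
    sub_pos.2 hcβ]

end StronglyMonotone

section AntiWindup

variable {E : Type*} [NormedAddCommGroup E] [InnerProductSpace ℝ E] {Z : Set E} {P f : E → E}
  {K L β : ℝ}

noncomputable def antiWindupField (P f : E → E) (K : ℝ) (w : E) : E :=
  f (P w) - K⁻¹ • (w - P w)

theorem IsMetricProj.norm_antiWindupField_sub_le (hP : IsMetricProj Z P)
    (hLip : ∀ x ∈ Z, ∀ y ∈ Z, ‖f x - f y‖ ≤ L * ‖x - y‖) (w w' : E) :
    ‖antiWindupField P f K w - antiWindupField P f K w'‖ ≤ (|L| + 2 * |K⁻¹|) * ‖w - w'‖ := by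
  have hPw := hP.norm_sub_le w w'
  have hf : ‖f (P w) - f (P w')‖ ≤ |L| * ‖w - w'‖ :=
    (hLip _ (hP w).1 _ (hP w').1).trans
      (mul_le_mul (le_abs_self L) hPw (norm_nonneg _) (abs_nonneg L))
  have hres : ‖(w - P w) - (w' - P w')‖ ≤ 2 * ‖w - w'‖ := by
    rw [show (w - P w) - (w' - P w') = (w - w') - (P w - P w') by abel]
    linarith [_root_.norm_sub_le (w - w') (P w - P w')]
  have hsplit : antiWindupField P f K w - antiWindupField P f K w'
      = (f (P w) - f (P w')) - K⁻¹ • ((w - P w) - (w' - P w')) := by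
    simp only [antiWindupField, smul_sub]; abel
  rw [hsplit]
  refine (_root_.norm_sub_le _ _).trans ?_
  rw [norm_smul, Real.norm_eq_abs]
  nlinarith [abs_nonneg K⁻¹]

theorem IsMetricProj.antiWindupField_stronglyMonotone (hP : IsMetricProj Z P)
    (hLip : ∀ x ∈ Z, ∀ y ∈ Z, ‖f x - f y‖ ≤ L * ‖x - y‖)
    (hmono : ∀ x ∈ Z, ∀ x' ∈ Z, β * ‖x - x'‖ ^ 2 ≤ ⟪f x' - f x, x - x'⟫)
    (hβ : 0 < β) (hK : 0 < K) (hKL : K * L ^ 2 < 4 * β) :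
    ∃ c > 0, ∀ w w', c * ‖w - w'‖ ^ 2 ≤
      ⟪antiWindupField P f K w' - antiWindupField P f K w, w - w'⟫ := by
  have hdisc : L ^ 2 < 4 * β * K⁻¹ := by
    rw [← div_eq_mul_inv, lt_div_iff₀ hK, mul_comm]; exact hKL
  obtain ⟨c, hc, hquad⟩ := exists_pos_mul_sq_add_sq_le hβ (inv_pos.2 hK) hdisc
  refine ⟨c / 2, half_pos hc, fun w w' => ?_⟩
  set d := P w - P w'
  set e := (w - P w) - (w' - P w')
  have hsplit : w - w' = d + e := by simp only [d, e]; abel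
  have hF : antiWindupField P f K w' - antiWindupField P f K w
      = (f (P w') - f (P w)) + K⁻¹ • e := by
    simp only [antiWindupField, e, smul_sub]; abel
  have hdd : β * ‖d‖ ^ 2 ≤ ⟪f (P w') - f (P w), d⟫ := hmono _ (hP w).1 _ (hP w').1
  have hde : -(L * ‖d‖ * ‖e‖) ≤ ⟪f (P w') - f (P w), e⟫ := by
    have hlip : ‖f (P w') - f (P w)‖ ≤ L * ‖d‖ := by
      rw [norm_sub_rev (P w)]; exact hLip _ (hP w').1 _ (hP w).1
    have := mul_le_mul_of_nonneg_right hlip (norm_nonneg e)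
    linarith [neg_abs_le ⟪f (P w') - f (P w), e⟫, abs_real_inner_le_norm (f (P w') - f (P w)) e]
  have hed : 0 ≤ ⟪e, d⟫ := hP.inner_sub_nonneg w w'
  have hexpand : ⟪antiWindupField P f K w' - antiWindupField P f K w, w - w'⟫
      = ⟪f (P w') - f (P w), d⟫ + ⟪f (P w') - f (P w), e⟫ + K⁻¹ * ⟪e, d⟫ + K⁻¹ * ‖e‖ ^ 2 := by
    rw [hF, hsplit, ← real_inner_self_eq_norm_sq]
    simp only [inner_add_left, inner_add_right, real_inner_smul_left]
    ring
  have hpar : ‖w - w'‖ ^ 2 ≤ 2 * (‖d‖ ^ 2 + ‖e‖ ^ 2) := by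
    rw [hsplit]
    nlinarith [norm_add_le d e, norm_nonneg (d + e), sq_nonneg (‖d‖ - ‖e‖)]
  nlinarith [hquad ‖d‖ ‖e‖, mul_nonneg (inv_pos.2 hK).le hed]

theorem IsMetricProj.inner_le_zero_of_antiWindupField_eq_zero (hP : IsMetricProj Z P)
    (hK : 0 < K) {w : E} (hw : antiWindupField P f K w = 0) :
    ∀ y ∈ Z, ⟪f (P w), y - P w⟫ ≤ 0 := by
  have hres : w - P w = K • f (P w) := by
    rw [antiWindupField, sub_eq_zero] at hw
    rw [hw, smul_inv_smul₀ hK.ne']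
  refine (hP.apply_add_smul_eq_iff (hP w).1 hK).1 ?_
  rw [← hres, add_sub_cancel]

end AntiWindup

section Dissipative

variable {E : Type*} [NormedAddCommGroup E] [InnerProductSpace ℝ E]

theorem norm_sub_sq_le_exp_mul {F : E → E} {z : ℝ → E} {zs : E} {c T : ℝ} (hT : 0 ≤ T)
    (hcont : ContinuousOn z (Icc 0 T)) (hderiv : ∀ t ∈ Ioo 0 T, HasDerivAt z (F (z t)) t)
    (hlyap : ∀ w, c * ‖w - zs‖ ^ 2 ≤ ⟪F w, zs - w⟫) :
    ‖z T - zs‖ ^ 2 ≤ Real.exp (-(2 * c * T)) * ‖z 0 - zs‖ ^ 2 := by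
  set g : ℝ → ℝ := fun t => Real.exp (2 * c * t) * ‖z t - zs‖ ^ 2
  have hg : AntitoneOn g (Icc 0 T) := by
    refine antitoneOn_of_hasDerivWithinAt_nonpos (convex_Icc 0 T)
      (f' := fun t => Real.exp (2 * c * t) * (2 * c) * ‖z t - zs‖ ^ 2
        + Real.exp (2 * c * t) * (2 * ⟪z t - zs, F (z t)⟫)) ?_ ?_ ?_
    · exact (Real.continuous_exp.comp (continuous_const_mul _)).continuousOn.mul
        ((hcont.sub continuousOn_const).norm.pow 2)
    · intro t ht
      rw [interior_Icc] at ht ⊢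
      have hexp := ((hasDerivAt_id t).const_mul (2 * c)).exp
      rw [mul_one] at hexp
      exact (hexp.mul ((hderiv t ht).sub_const zs).norm_sq).hasDerivWithinAt
    · intro t _
      have hinner : ⟪z t - zs, F (z t)⟫ = -⟪F (z t), zs - z t⟫ := by
        rw [real_inner_comm, ← inner_neg_right, neg_sub]
      rw [hinner]
      nlinarith [mul_le_mul_of_nonneg_left (hlyap (z t)) (Real.exp_pos (2 * c * t)).le]
  have hle := hg ⟨le_rfl, hT⟩ ⟨hT, le_rfl⟩ hT
  simp only [g, mul_zero, Real.exp_zero, one_mul] at hle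
  rw [Real.exp_neg, ← div_eq_inv_mul, le_div_iff₀ (Real.exp_pos _), mul_comm]
  exact hle

theorem tendsto_of_hasDerivAt_of_inner_le {F : E → E} {z : ℝ → E} {zs : E} {c : ℝ} (hc : 0 < c)
    (hcont : ∀ T, 0 ≤ T → ContinuousOn z (Icc 0 T))
    (hderiv : ∀ T, ∀ t ∈ Ioo 0 T, HasDerivAt z (F (z t)) t)
    (hlyap : ∀ w, c * ‖w - zs‖ ^ 2 ≤ ⟪F w, zs - w⟫) :
    Tendsto z atTop (𝓝 zs) := by
  have hbound : ∀ T, 0 ≤ T → ‖z T - zs‖ ≤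
      Real.sqrt (Real.exp (-(2 * c * T)) * ‖z 0 - zs‖ ^ 2) := fun T hT =>
    Real.le_sqrt_of_sq_le (norm_sub_sq_le_exp_mul hT (hcont T hT) (hderiv T) hlyap)
  have hdecay : Tendsto (fun T => Real.sqrt (Real.exp (-(2 * c * T)) * ‖z 0 - zs‖ ^ 2))
      atTop (𝓝 0) := by
    have hexp : Tendsto (fun T => Real.exp (-(2 * c * T))) atTop (𝓝 0) :=
      Real.tendsto_exp_neg_atTop_nhds_zero.comp
        (tendsto_id.const_mul_atTop (by positivity))
    have h := (hexp.mul_const (‖z 0 - zs‖ ^ 2)).sqrt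
    rwa [zero_mul, Real.sqrt_zero] at h
  rw [tendsto_iff_norm_sub_tendsto_zero]
  refine squeeze_zero' (Eventually.of_forall fun _ => norm_nonneg _) ?_ hdecay
  filter_upwards [eventually_ge_atTop 0] with T hT using hbound T hT

end Dissipative

section EuclideanProjection

variable {n : ℕ} {Z : Set (Euc n)} {P : Euc n → Euc n}

theorem IsMetricProj.projSet_eq (hP : IsMetricProj Z P) (hconv : Convex ℝ Z) (x : Euc n) :
    projSet Z x = {P x} := by
  ext c
  simp only [projSet, mem_ofPred_eq, mem_singleton_iff]
  constructor
  · rintro ⟨hc, hdist⟩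
    refine hP.eq_of_inner_le hc ((norm_eq_iInf_iff_real_inner_le_zero hconv hc).1 ?_)
    simpa only [infDist_eq_iInf, dist_eq_norm] using hdist
  · rintro rfl
    refine ⟨(hP x).1, ?_⟩
    simpa only [infDist_eq_iInf, dist_eq_norm] using
      (norm_eq_iInf_iff_real_inner_le_zero hconv (hP x).1).2 (hP x).2

theorem IsMetricProj.AWAspec_eq_singleton (hP : IsMetricProj Z P) (hconv : Convex ℝ Z)
    {G : Euc n → EucOp n} (hG : ∀ y, G y = ContinuousLinearMap.id ℝ (Euc n))
    (f : Euc n → Euc n) (K : ℝ) (w : Euc n) :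
    AWAspec f G Z K w = {antiWindupField P f K w} := by
  rw [AWAspec, hP.projSet_eq hconv, image_singleton, hG, ContinuousLinearMap.id_apply,
    antiWindupField]

end EuclideanProjection

section Solutions

variable {n : ℕ} {C : Set (Euc n)} {T : ℝ} {z v : ℝ → Euc n}

theorem SolutionVia.continuousOn {H : Euc n → Set (Euc n)} (h : SolutionVia H C T z v)
    (hT : 0 ≤ T) : ContinuousOn z (Icc 0 T) := by
  have hprim : ContinuousOn (fun t => z 0 + ∫ s in (0 : ℝ)..t, v s) (Icc 0 T) := by
    have hint := h.2.1
    rw [← uIcc_of_le hT] at hint ⊢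
    exact continuousOn_const.add (intervalIntegral.continuousOn_primitive_interval hint)
  exact hprim.congr h.2.2.2

theorem SolutionVia.hasDerivAt {F : Euc n → Euc n} (hF : Continuous F)
    (h : SolutionVia (fun w => {F w}) C T z v) {t : ℝ} (ht : t ∈ Ioo 0 T) :
    HasDerivAt z (F (z t)) t := by
  have hucont : ContinuousOn (fun s => F (z s)) (Icc 0 T) :=
    hF.comp_continuousOn (h.continuousOn (ht.1.le.trans ht.2.le))
  obtain ⟨-, -, hvF, hz⟩ := h
  set u := fun s => F (z s)
  have hvu : ∀ᵐ s, s ∈ Icc 0 T → v s = u s := (ae_restrict_iff' measurableSet_Icc).1 hvF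
  have hzu : ∀ s ∈ Icc 0 T, z s = z 0 + ∫ r in (0 : ℝ)..s, u r := by
    intro s hs
    rw [hz s hs, intervalIntegral.integral_congr_ae]
    filter_upwards [hvu] with r hr hrmem
    rw [uIoc_of_le hs.1] at hrmem
    exact hr ⟨hrmem.1.le, hrmem.2.trans hs.2⟩
  have hIcc : Icc 0 T ∈ 𝓝 t := Icc_mem_nhds ht.1 ht.2
  have huint : IntervalIntegrable u volume 0 t :=
    (hucont.mono (Icc_subset_Icc_right ht.2.le)).intervalIntegrable_of_Icc ht.1.le
  have hderiv := (intervalIntegral.integral_hasDerivAt_right huint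
    ((hucont.mono Ioo_subset_Icc_self).stronglyMeasurableAtFilter isOpen_Ioo t ht)
    (hucont.continuousAt hIcc)).const_add (z 0)
  exact hderiv.congr_of_eventuallyEq (eventually_of_mem hIcc hzu)

end Solutions

theorem inner_nonpos_of_forall_norm_le {E : Type*} [NormedAddCommGroup E]
    [InnerProductSpace ℝ E] {v w : E} (h : ∀ s > (0 : ℝ), ‖w‖ ≤ ‖s • v - w‖) : ⟪w, v⟫ ≤ 0 := by
  by_contra! hpos
  set s := ⟪w, v⟫ / (‖v‖ ^ 2 + 1)
  have hs : 0 < s := by positivity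
  have hsv : s * (‖v‖ ^ 2 + 1) = ⟪w, v⟫ := div_mul_cancel₀ _ (by positivity)
  have hsq := pow_le_pow_left₀ (norm_nonneg _) (h s hs) 2
  rw [norm_sub_sq_real, norm_smul, Real.norm_eq_abs, abs_of_pos hs, real_inner_smul_left,
    real_inner_comm] at hsq
  nlinarith [mul_pos hs hs]

section TangentCone

variable {n : ℕ} {C : Set (Euc n)} {x : Euc n}

theorem sub_mem_tanCone (hconv : Convex ℝ C) (hx : x ∈ C) {y : Euc n} (hy : y ∈ C) :
    y - x ∈ tanCone C x := by
  set δ : ℕ → ℝ := fun k => 1 / ((k : ℝ) + 1)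
  have hδpos : ∀ k, 0 < δ k := fun k => Nat.one_div_pos_of_nat
  have hδ : Tendsto δ atTop (𝓝 0) := tendsto_one_div_add_atTop_nhds_zero_nat
  refine ⟨fun k => x + δ k • (y - x), δ, fun k => ?_, ?_, hδpos, hδ, ?_⟩
  · have hδle : δ k ≤ 1 := Nat.one_div_le_one_div (Nat.zero_le k) |>.trans_eq (by simp)
    exact hconv.add_smul_sub_mem hx hy ⟨(hδpos k).le, hδle⟩
  · simpa using tendsto_const_nhds.add (hδ.smul_const (y - x))
  · simp only [add_sub_cancel_left, inv_smul_smul₀ (hδpos _).ne']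
    exact tendsto_const_nhds

theorem smul_mem_tanCone {v : Euc n} (hv : v ∈ tanCone C x) {s : ℝ} (hs : 0 < s) :
    s • v ∈ tanCone C x := by
  obtain ⟨xk, δk, hxC, hxlim, hδpos, hδlim, hvlim⟩ := hv
  refine ⟨xk, fun k => δk k / s, hxC, hxlim, fun k => div_pos (hδpos k) hs, ?_, ?_⟩
  · simpa using hδlim.div_const s
  · refine (hvlim.const_smul s).congr fun k => ?_
    rw [smul_smul, inv_div, div_eq_mul_inv]

theorem inner_nonpos_of_mem_tanCone {η : Euc n} (h : ∀ y ∈ C, ⟪η, y - x⟫ ≤ 0) {v : Euc n}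
    (hv : v ∈ tanCone C x) : ⟪η, v⟫ ≤ 0 := by
  obtain ⟨xk, δk, hxC, -, hδpos, -, hvlim⟩ := hv
  refine le_of_tendsto' (tendsto_const_nhds.inner hvlim) fun k => ?_
  rw [real_inner_smul_right]
  exact mul_nonpos_of_nonneg_of_nonpos (inv_nonneg.2 (hδpos k).le) (h _ (hxC k))

theorem zero_mem_projTanI_iff (hconv : Convex ℝ C) (hx : x ∈ C) (w : Euc n) :
    (0 : Euc n) ∈ projTanI C w x ↔ ∀ y ∈ C, ⟪w, y - x⟫ ≤ 0 := by
  have hzero : (0 : Euc n) ∈ tanCone C x := sub_self x ▸ sub_mem_tanCone hconv hx hx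
  simp only [projTanI, mem_ofPred_eq, zero_sub, norm_neg, hzero, true_and]
  constructor
  · intro hmin y hy
    exact inner_nonpos_of_forall_norm_le fun s hs =>
      hmin _ (smul_mem_tanCone (sub_mem_tanCone hconv hx hy) hs)
  · intro hvi u hu
    have hwu : ⟪w, u⟫ ≤ 0 := inner_nonpos_of_mem_tanCone hvi hu
    refine (sq_le_sq₀ (norm_nonneg _) (norm_nonneg _)).1 ?_
    rw [norm_sub_sq_real, real_inner_comm]
    nlinarith [sq_nonneg ‖u‖]

end TangentCone

/-- cf. Thm. 6.3: for closed convex `Z` and `−f` `β`-strongly monotone,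
`L`-Lipschitz, and `0 < K < 4β/L²`, the anti-windup system has a unique equilibrium `z*`,
every complete solution converges to it, and `P_Z(z*)` is the unique equilibrium of the
projected dynamical system. -/
theorem stmt18 {n : ℕ} (Z : Set (Euc n)) (hZcl : IsClosed Z) (hZconv : Convex ℝ Z)
    (hZne : Z.Nonempty)
    (f : Euc n → Euc n) (L β : ℝ) (hβ : 0 < β)
    (hLip : ∀ x ∈ Z, ∀ y ∈ Z, ‖f x - f y‖ ≤ L * ‖x - y‖)
    (hmono : ∀ x ∈ Z, ∀ x' ∈ Z, β * ‖x - x'‖ ^ 2 ≤ ⟪f x' - f x, x - x'⟫)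
    (Id : Euc n → EucOp n) (hId : ∀ y : Euc n, Id y = ContinuousLinearMap.id ℝ (Euc n))
    (K : ℝ) (hK0 : 0 < K) (hK : K < 4 * β / L ^ 2) :
    ∃ zstar : Euc n,
      (0 : Euc n) ∈ AWAspec f Id Z K zstar ∧
      (∀ w : Euc n, (0 : Euc n) ∈ AWAspec f Id Z K w → w = zstar) ∧
      (∀ z : ℝ → Euc n, IsCompleteSol (AWAspec f Id Z K) Set.univ z →
        Filter.Tendsto z Filter.atTop (nhds zstar)) ∧
      ∃ zbar : Euc n, projSet Z zstar = {zbar} ∧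
        (0 : Euc n) ∈ projTanI Z (f zbar) zbar ∧
        ∀ w ∈ Z, (0 : Euc n) ∈ projTanI Z (f w) w → w = zbar := by
  obtain ⟨P, hP⟩ := exists_isMetricProj hZcl.isComplete hZconv hZne
  set F := antiWindupField P f K
  have hAWA : AWAspec f Id Z K = fun w => {F w} := funext (hP.AWAspec_eq_singleton hZconv hId f K)
  have hKL : K * L ^ 2 < 4 * β := by
    rcases (sq_nonneg L).eq_or_lt with hL | hL
    · rw [← hL, mul_zero]; positivity
    · exact (lt_div_iff₀ hL).1 hK
  obtain ⟨c, hc, hFmono⟩ := hP.antiWindupField_stronglyMonotone hLip hmono hβ hK0 hKL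
  have hFlip := hP.norm_antiWindupField_sub_le (K := K) hLip
  obtain ⟨zstar, hzstar⟩ := exists_eq_zero_of_stronglyMonotone hc hFlip hFmono
  have hlyap : ∀ w, c * ‖w - zstar‖ ^ 2 ≤ ⟪F w, zstar - w⟫ := fun w => by
    simpa [hzstar, norm_sub_rev] using hFmono zstar w
  have hFcont : Continuous F :=
    (LipschitzWith.of_dist_le' fun x y => by simpa only [dist_eq_norm] using hFlip x y).continuous
  have hVI := hP.inner_le_zero_of_antiWindupField_eq_zero hK0 hzstar
  refine ⟨zstar, ?_, fun w hw => ?_, fun z hz => ?_, P zstar, hP.projSet_eq hZconv zstar,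
    (zero_mem_projTanI_iff hZconv (hP zstar).1 _).2 hVI, fun w hw hproj => ?_⟩
  · rw [hAWA]; exact hzstar.symm
  · rw [hAWA] at hw; exact eq_of_stronglyMonotone hc hFmono hw.symm hzstar
  · rw [hAWA] at hz
    choose v hv using hz
    exact tendsto_of_hasDerivAt_of_inner_le hc (fun T hT => (hv T hT).continuousOn hT)
      (fun T t ht => (hv T (ht.1.le.trans ht.2.le)).hasDerivAt hFcont ht) hlyap
  · exact eq_of_forall_inner_le_zero_of_stronglyMonotoneOn hβ hmono hw (hP zstar).1
      ((zero_mem_projTanI_iff hZconv hw _).1 hproj) hVI
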